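/- arXiv:1607.05685 — 9 statements merged into one kernel-verified Lean document; each statement's English description precedes it below -/
import Mathlib

section
/- For every integer m ≥ 1, the Dedekind sum satisfies 𝐬(m, 4m+1) = (4m − m²)/(12m + 3). -/
/-!
Write `i = 4j + s + 1` with `0 ≤ j < m` and `0 ≤ s < 4`. Since `4m ≡ -1 (mod 4m+1)`, the residue of
`i·m` is `(s+1)m - j`, already in `[1, 4m]`, so every term of the Dedekind sum is a product of
two linear functions of `j`. Each block of four consecutive `i` then contributes a quadratic in `j`,
and the sums of `j` and `j²` over `j < m` give the closed form.
-/

open Classical in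
/-- The sawtooth function `((x))`: `x - ⌊x⌋ - 1/2` if `x` is not an integer, `0` otherwise. -/
noncomputable def sawtooth (x : ℝ) : ℝ :=
  if ∃ n : ℤ, x = (n : ℝ) then 0 else x - ⌊x⌋ - 1 / 2

/-- The Dedekind sum `𝐬(q,p) = Σ_{i=1}^{p-1} ((i/p))·((iq/p))`. -/
noncomputable def dedekindSum (q p : ℤ) : ℝ :=
  ∑ i ∈ Finset.Icc (1 : ℤ) (p - 1), sawtooth ((i : ℝ) / (p : ℝ)) * sawtooth ((i : ℝ) * (q : ℝ) / (p : ℝ))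

open Finset

lemma sawtooth_of_forall_ne {x : ℝ} (hx : ∀ n : ℤ, x ≠ n) : sawtooth x = Int.fract x - 1 / 2 := by
  rw [sawtooth, if_neg (fun ⟨n, hn⟩ => hx n hn), Int.fract]

lemma sawtooth_intCast_div {a p : ℤ} (hp : 0 < p) (ha : ¬ p ∣ a) :
    sawtooth (a / p) = ((a % p : ℤ) : ℝ) / p - 1 / 2 := by
  lift p to ℕ using hp.le
  have hp' : (p : ℝ) ≠ 0 := by exact_mod_cast hp.ne'
  rw [sawtooth_of_forall_ne, Int.cast_natCast, Int.fract_div_intCast_eq_div_intCast_mod]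
  rintro n hn
  exact ha ⟨n, by rw [Int.cast_natCast, div_eq_iff hp'] at hn; exact_mod_cast hn.trans (mul_comm _ _)⟩

lemma dedekindSum_eq_sum_emod {q p : ℤ} (hqp : IsCoprime q p) :
    dedekindSum q p =
      ∑ i ∈ Icc 1 (p - 1), ((i : ℝ) / p - 1 / 2) * (((i * q % p : ℤ) : ℝ) / p - 1 / 2) := by
  refine sum_congr rfl fun i hi => ?_
  obtain ⟨hi1, hip⟩ := mem_Icc.mp hi
  have hp : 0 < p := by omega
  have hpi : ¬ p ∣ i := fun h => by linarith [Int.le_of_dvd (by omega) h]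
  have hpiq : ¬ p ∣ i * q := fun h => hpi (hqp.symm.dvd_of_dvd_mul_right h)
  rw [sawtooth_intCast_div hp hpi, Int.emod_eq_of_lt (by omega) (by omega), ← Int.cast_mul,
    sawtooth_intCast_div hp hpiq]

lemma sum_Icc_one_eq_sum_range {M : Type*} [AddCommMonoid M] (f : ℤ → M) (n : ℕ) :
    ∑ i ∈ Icc (1 : ℤ) n, f i = ∑ i ∈ range n, f (i + 1) := by
  refine sum_nbij' (fun i => (i - 1).toNat) (fun i => i + 1) ?_ ?_ ?_ ?_ ?_ <;>
    intro i hi <;> simp only [mem_Icc, mem_range] at hi ⊢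
  all_goals first | omega | congr 1; omega

lemma sum_range_mul_eq_sum_sum {M : Type*} [AddCommMonoid M] (g : ℕ → M) (k n : ℕ) :
    ∑ i ∈ range (k * n), g i = ∑ j ∈ range n, ∑ s ∈ range k, g (k * j + s) := by
  induction n with
  | zero => simp
  | succ n ih => rw [Nat.mul_succ, sum_range_add, ih, sum_range_succ]

lemma sum_range_quadratic (a b c : ℝ) (n : ℕ) :
    ∑ j ∈ range n, (a * j ^ 2 + b * j + c) =
      a * (n * (n - 1) * (2 * n - 1) / 6) + b * (n * (n - 1) / 2) + c * n := by
  induction n with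
  | zero => simp
  | succ n ih => rw [sum_range_succ, ih]; push_cast; ring

lemma mul_emod_four_mul_add_one {m j s : ℤ} (hj : 0 ≤ j) (hjm : j < m) (hs : 0 ≤ s) (hs4 : s < 4) :
    (4 * j + s + 1) * m % (4 * m + 1) = (s + 1) * m - j := by
  rw [show (4 * j + s + 1) * m = (s + 1) * m - j + j * (4 * m + 1) by ring,
    Int.add_mul_emod_self_right, Int.emod_eq_of_lt (by nlinarith) (by nlinarith)]

lemma sum_range_four_block {n j : ℕ} (hj : j < n) :
    ∑ s ∈ range 4, ((4 * (j : ℝ) + s + 1) / (4 * n + 1) - 1 / 2) *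
        ((((4 * j + s + 1) * n % (4 * n + 1) : ℤ) : ℝ) / (4 * n + 1) - 1 / 2) =
      (-16 * (j : ℝ) ^ 2 + 16 * (n - 1) * j + (-4 * n ^ 2 + 13 * n - 4)) / (4 * n + 1) ^ 2 := by
  have hemod : ∀ s ∈ range 4, (((4 * j + s + 1) * n % (4 * n + 1) : ℤ) : ℝ) = (s + 1) * n - j := by
    intro s hs
    rw [mul_emod_four_mul_add_one (by positivity) (by omega) (by positivity)
      (by simp only [mem_range] at hs; omega)]
    push_cast
    ring
  rw [sum_congr rfl fun s hs => by rw [hemod s hs]]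
  simp only [sum_range_succ, sum_range_zero]
  field_simp
  ring

/-- For every integer `m ≥ 1`, `𝐬(m, 4m+1) = (4m − m²)/(12m + 3)`. -/
theorem stmt_2 (m : ℤ) (hm : 1 ≤ m) :
    dedekindSum m (4 * m + 1) = (4 * (m : ℝ) - (m : ℝ) ^ 2) / (12 * (m : ℝ) + 3) := by
  lift m to ℕ using (by omega) with n
  have hcop : IsCoprime (n : ℤ) (4 * n + 1) := ⟨-4, 1, by ring⟩
  rw [dedekindSum_eq_sum_emod hcop, add_sub_cancel_right, show (4 * n : ℤ) = (4 * n : ℕ) by simp,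
    sum_Icc_one_eq_sum_range, sum_range_mul_eq_sum_sum]
  push_cast
  rw [sum_congr rfl fun j hj => sum_range_four_block (mem_range.mp hj), ← sum_div,
    sum_range_quadratic]
  field_simp
  ring
end

section
/- For every integer m ≥ 1 and each ε ∈ {1, −1}, −𝐬(1,4m) + (1/(4m))·(4m² + 2m) ≠ ε·( −(1/12)·( −((4m+1)/m)·(1/(4m+1)² − 1/2) − m/(4m+1) + 3 + 12·𝐬(m,4m+1) ) ). -/
/-!
Both Dedekind sums have closed forms: `𝐬(1,p) = (p-1)(p-2)/(12p)`, since there `((i/p)) = i/p - 1/2`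
on both factors, and `𝐬(m,4m+1) = m(4-m)/(3(4m+1))`, since writing `i = 4j+k` with `0 ≤ j < m`,
`1 ≤ k ≤ 4` gives `i·m = j(4m+1) + (km - j)` with `0 < km - j < 4m+1`, so each block of four terms is
a polynomial in `j`. Substituting, the left side `L = (16m²+18m-1)/(24m)` and the bracket `R` satisfy
`L + R = 3m/4 > 0` and `L - R = (28m³+79m²+14m-1)/(12m(4m+1)) > 0`, hence `|R| < L`.
-/

open Finset

theorem sawtooth_intCast_add (a : ℤ) {y : ℝ} (hy0 : 0 < y) (hy1 : y < 1) :
    sawtooth (a + y) = y - 1 / 2 := by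
  have h_not_int : ¬ ∃ n : ℤ, (a : ℝ) + y = n := by
    rintro ⟨n, hn⟩
    have hy : y = ((n - a : ℤ) : ℝ) := by push_cast; linarith
    rw [hy] at hy0 hy1
    norm_cast at hy0 hy1
    omega
  have h_floor : ⌊(a : ℝ) + y⌋ = a := by
    rw [Int.floor_intCast_add, Int.floor_eq_zero_iff.mpr ⟨hy0.le, hy1⟩, add_zero]
  rw [sawtooth, if_neg h_not_int, h_floor]
  ring

theorem sawtooth_div_of_eq_mul_add {n p a r : ℤ} (h : n = a * p + r) (hr : 0 < r)
    (hrp : r < p) : sawtooth (n / p) = r / p - 1 / 2 := by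
  have hp : (0 : ℝ) < p := by exact_mod_cast hr.trans hrp
  have hn : (n : ℝ) / p = a + r / p := by rw [h]; push_cast; field_simp
  rw [hn, sawtooth_intCast_add a (by positivity) ((div_lt_one hp).mpr (by exact_mod_cast hrp))]

theorem Finset.sum_Icc_add_one_right {M : Type*} [AddCommMonoid M] (f : ℤ → M) {a b : ℤ}
    (h : a ≤ b + 1) : ∑ i ∈ Icc a (b + 1), f i = ∑ i ∈ Icc a b, f i + f (b + 1) := by
  rw [← insert_Icc_right_eq_Icc_add_one h, sum_insert (by simp), add_comm]

theorem Finset.sum_Ico_add_one_right {M : Type*} [AddCommMonoid M] (f : ℤ → M) {a b : ℤ}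
    (h : a ≤ b) : ∑ i ∈ Ico a (b + 1), f i = ∑ i ∈ Ico a b, f i + f b := by
  rw [← insert_Ico_right_eq_Ico_add_one_of_not_isMax h (not_isMax b), sum_insert (by simp),
    add_comm]

theorem Finset.sum_Icc_one_four {M : Type*} [AddCommMonoid M] (f : ℤ → M) :
    ∑ k ∈ Icc 1 4, f k = f 1 + f 2 + f 3 + f 4 := by
  rw [show Icc (1 : ℤ) 4 = {1, 2, 3, 4} from rfl]
  simp [add_assoc]

theorem Finset.sum_Icc_one_four_mul {M : Type*} [AddCommMonoid M] (f : ℤ → M) {n : ℤ}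
    (hn : 0 ≤ n) : ∑ i ∈ Icc 1 (4 * n), f i = ∑ j ∈ Ico 0 n, ∑ k ∈ Icc 1 4, f (4 * j + k) := by
  induction n, hn using Int.leInduction with
  | base => simp
  | succ n hn ih =>
    rw [show 4 * (n + 1) = 4 * n + 3 + 1 by ring, sum_Icc_add_one_right _ (by omega),
      show 4 * n + 3 = 4 * n + 2 + 1 by ring, sum_Icc_add_one_right _ (by omega),
      show 4 * n + 2 = 4 * n + 1 + 1 by ring, sum_Icc_add_one_right _ (by omega),
      sum_Icc_add_one_right _ (by omega), ih, sum_Ico_add_one_right _ hn, sum_Icc_one_four]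
    norm_num [add_assoc]

theorem sum_Icc_div_sub_half_sq (p : ℝ) {n : ℤ} (hn : 0 ≤ n) :
    ∑ i ∈ Icc 1 n, ((i : ℝ) / p - 1 / 2) ^ 2 =
      n * (n + 1) * (2 * n + 1) / (6 * p ^ 2) - n * (n + 1) / (2 * p) + n / 4 := by
  induction n, hn using Int.leInduction with
  | base => simp
  | succ n hn ih =>
    rw [sum_Icc_add_one_right _ (by omega), ih]
    push_cast
    ring

theorem dedekindSum_one {p : ℤ} (hp : 0 < p) :
    dedekindSum 1 p = (p - 1) * (p - 2) / (12 * p) := by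
  have hp' : (p : ℝ) ≠ 0 := by positivity
  have h_summand : ∀ i ∈ Icc 1 (p - 1),
      sawtooth ((i : ℝ) / p) * sawtooth ((i : ℝ) * (1 : ℤ) / p) = ((i : ℝ) / p - 1 / 2) ^ 2 := by
    intro i hi
    rw [mem_Icc] at hi
    rw [Int.cast_one, mul_one, sawtooth_div_of_eq_mul_add (a := 0) (by ring) (by omega) (by omega),
      sq]
  rw [dedekindSum, sum_congr rfl h_summand, sum_Icc_div_sub_half_sq _ (by omega)]
  push_cast
  field_simp
  ring

theorem sawtooth_mul_sawtooth_four_mul_add {m j k : ℤ} (hj : 0 ≤ j) (hjm : j < m) (hk1 : 1 ≤ k)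
    (hk4 : k ≤ 4) :
    sawtooth (((4 * j + k : ℤ) : ℝ) / ((4 * m + 1 : ℤ) : ℝ)) *
        sawtooth (((4 * j + k : ℤ) : ℝ) * m / ((4 * m + 1 : ℤ) : ℝ)) =
      ((4 * j + k) / (4 * m + 1) - 1 / 2) * ((k * m - j) / (4 * m + 1) - 1 / 2) := by
  have h_left := sawtooth_div_of_eq_mul_add (n := 4 * j + k) (p := 4 * m + 1) (a := 0)
    (r := 4 * j + k) (by ring) (by omega) (by omega)
  have h_right := sawtooth_div_of_eq_mul_add (n := (4 * j + k) * m) (p := 4 * m + 1) (a := j)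
    (r := k * m - j) (by ring) (by nlinarith) (by nlinarith)
  push_cast at h_left h_right ⊢
  rw [h_left, h_right]

theorem sum_Ico_sum_Icc_div_sub_half_mul (m p : ℝ) {n : ℤ} (hn : 0 ≤ n) :
    ∑ j ∈ Ico 0 n, ∑ k ∈ Icc (1 : ℤ) 4, ((4 * j + k) / p - 1 / 2) * ((k * m - j) / p - 1 / 2 : ℝ) =
      n * (-16 * n ^ 2 + (60 * m + 9) * n + 30 * m + 7) / (3 * p ^ 2) -
        n * (3 * n + 5 * m + 2) / p + n := by
  induction n, hn using Int.leInduction with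
  | base => simp
  | succ n hn ih =>
    rw [sum_Ico_add_one_right _ hn, ih, sum_Icc_one_four]
    push_cast
    ring

theorem dedekindSum_four_mul_add_one {m : ℤ} (hm : 0 ≤ m) :
    dedekindSum m (4 * m + 1) = m * (4 - m) / (3 * (4 * m + 1)) := by
  have hp : (4 * m + 1 : ℝ) ≠ 0 := by positivity
  rw [dedekindSum, add_sub_cancel_right, sum_Icc_one_four_mul _ hm]
  rw [sum_congr rfl fun j hj => sum_congr rfl fun k hk =>
    sawtooth_mul_sawtooth_four_mul_add (mem_Ico.mp hj).1 (mem_Ico.mp hj).2 (mem_Icc.mp hk).1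
      (mem_Icc.mp hk).2, sum_Ico_sum_Icc_div_sub_half_mul _ _ hm]
  field_simp
  ring

theorem ne_mul_of_abs_lt {a b ε : ℝ} (hε : ε = 1 ∨ ε = -1) (h : |b| < a) : a ≠ ε * b := by
  rw [abs_lt] at h
  rcases hε with rfl | rfl <;> intro <;> linarith

/-- Key computational step in the proof of Theorem 1.3: for every `m ≥ 1` and `ε ∈ {1, −1}`,
`λ(S³_K(4m)) = −𝐬(1,4m) + (1/(4m))·(4m² + 2m)` differs from `ε·λ(−P(4m+1,m))`. -/
theorem stmt_5 (m : ℤ) (hm : 1 ≤ m) (ε : ℝ) (hε : ε = 1 ∨ ε = -1) :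
    -dedekindSum 1 (4 * m) + (1 / (4 * (m : ℝ))) * (4 * (m : ℝ) ^ 2 + 2 * (m : ℝ)) ≠
      ε * (-(1 / 12) * (-((4 * (m : ℝ) + 1) / (m : ℝ)) * (1 / (4 * (m : ℝ) + 1) ^ 2 - 1 / 2)
        - (m : ℝ) / (4 * (m : ℝ) + 1) + 3 + 12 * dedekindSum m (4 * m + 1))) := by
  rw [dedekindSum_one (by omega), dedekindSum_four_mul_add_one (by omega)]
  have hx : (1 : ℝ) ≤ m := by exact_mod_cast hm
  push_cast
  generalize (m : ℝ) = x at hx ⊢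
  have hx₀ : x ≠ 0 := by positivity
  have hp₀ : 4 * x + 1 ≠ 0 := by positivity
  refine ne_mul_of_abs_lt hε (abs_lt.mpr ⟨?_, ?_⟩) <;> rw [← sub_pos]
  · refine (by positivity : (0 : ℝ) < 3 * x / 4).trans_eq ?_
    field_simp
    ring
  · have h_num : 0 < 28 * x ^ 3 + 79 * x ^ 2 + 14 * x - 1 := by nlinarith
    refine (div_pos h_num (by positivity : (0 : ℝ) < 12 * x * (4 * x + 1))).trans_eq ?_
    field_simp
    ring
end

section
/- For every integer m ≥ 1, there do not exist an integer r ≥ 1 and integers n_1 > n_2 > ⋯ > n_r > 0 with n_1 = m+1 such that |(−1)^r + 2·Σ_{i=1}^{r} (−1)^{i−1+n_i}| = 2m+1. -/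
/-!
Since the `n i` decrease strictly from `n 1 = m + 1` and stay positive, `r ≤ m + 1`.
If `r = m + 1` the sequence is forced to be `m + 1, m, …, 1`, every exponent `i - 1 + n i`
equals `m + 1`, and the absolute value is `2m + 3`. Otherwise the trivial bound `2r + 1` leaves
only `r = m`, and then the first summand `(-1)^(m+1)` cancels against `(-1)^r`, giving at most
`2m - 1`.
-/

open Finset

lemma add_sub_le_of_strictAnti_chain {n : ℕ → ℕ} {r : ℕ}
    (hdec : ∀ i j, 1 ≤ i → i < j → j ≤ r → n j < n i) {i j : ℕ}
    (hi : 1 ≤ i) (hij : i ≤ j) (hj : j ≤ r) : n j + (j - i) ≤ n i := by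
  induction j, hij using Nat.le_induction with
  | base => simp
  | succ k hik ih =>
    have := hdec k (k + 1) (by omega) (by omega) hj
    have := ih (by omega)
    omega

section SignedSums

variable {ι : Type*} (S : Finset ι) (s : ℤ) (ε : ι → ℤ)

lemma abs_add_two_mul_sum_le (hs : |s| = 1) (hε : ∀ i ∈ S, |ε i| ≤ 1) :
    |s + 2 * ∑ i ∈ S, ε i| ≤ 2 * #S + 1 := by
  have hsum : |∑ i ∈ S, ε i| ≤ #S :=
    calc |∑ i ∈ S, ε i| ≤ ∑ i ∈ S, |ε i| := abs_sum_le_sum_abs _ _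
      _ ≤ ∑ _i ∈ S, (1 : ℤ) := sum_le_sum hε
      _ = #S := by simp
  calc |s + 2 * ∑ i ∈ S, ε i| ≤ |s| + |2 * ∑ i ∈ S, ε i| := abs_add_le _ _
    _ = 1 + 2 * |∑ i ∈ S, ε i| := by rw [hs, abs_mul, abs_two]
    _ ≤ 2 * #S + 1 := by linarith

lemma abs_add_two_mul_sum_le_of_cancel [DecidableEq ι] (hs : |s| = 1)
    (hε : ∀ i ∈ S, |ε i| ≤ 1) {j : ι} (hj : j ∈ S) (hεj : ε j = -s) :
    |s + 2 * ∑ i ∈ S, ε i| ≤ 2 * #S - 1 := by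
  have hrest := abs_add_two_mul_sum_le (S.erase j) (-s) ε (by rwa [abs_neg])
    (fun i hi => hε i (mem_of_mem_erase hi))
  rw [card_erase_of_mem hj, Nat.cast_sub (card_pos.mpr ⟨j, hj⟩)] at hrest
  rw [← add_sum_erase S ε hj, hεj]
  convert hrest using 2 <;> push_cast <;> ring

lemma abs_add_two_mul_sum_const (hs : |s| = 1) : |s + 2 * ∑ _i ∈ S, s| = 2 * #S + 1 := by
  rw [sum_const, nsmul_eq_mul, show s + 2 * (#S * s) = s * (2 * #S + 1) by ring, abs_mul, hs,
    one_mul, abs_of_nonneg (by positivity)]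

end SignedSums

theorem stmt_9_general (m : ℕ) :
    ¬ ∃ (r : ℕ) (n : ℕ → ℕ), 1 ≤ r ∧
      (∀ i, 1 ≤ i → i ≤ r → 0 < n i) ∧
      (∀ i j, 1 ≤ i → i < j → j ≤ r → n j < n i) ∧
      n 1 = m + 1 ∧
      |(-1 : ℤ) ^ r + 2 * ∑ i ∈ Finset.Icc 1 r, (-1 : ℤ) ^ (i - 1 + n i)| =
        2 * (m : ℤ) + 1 := by
  rintro ⟨r, n, hr, hpos, hdec, hn1, habs⟩
  have gap := @add_sub_le_of_strictAnti_chain n r hdec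
  have hr_le : r ≤ m + 1 := by have := gap le_rfl hr le_rfl; have := hpos r hr le_rfl; omega
  have hunit : ∀ i ∈ Icc 1 r, |(-1 : ℤ) ^ (i - 1 + n i)| ≤ 1 := by simp
  obtain rfl | rfl | hlt : r = m + 1 ∨ r = m ∨ r < m := by omega
  · have hexp : ∀ i ∈ Icc 1 (m + 1), (-1 : ℤ) ^ (i - 1 + n i) = (-1) ^ (m + 1) := by
      intro i hi
      rw [mem_Icc] at hi
      have := gap le_rfl hi.1 hi.2
      have := gap hi.1 hi.2 le_rfl
      have := hpos (m + 1) hr le_rfl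
      congr 1
      omega
    rw [sum_congr rfl hexp, abs_add_two_mul_sum_const _ _ (abs_neg_one_pow _), Nat.card_Icc]
      at habs
    omega
  · have := abs_add_two_mul_sum_le_of_cancel _ _ _ (abs_neg_one_pow r) hunit
      (left_mem_Icc.mpr hr) (by rw [hn1, Nat.sub_self, zero_add, pow_succ, mul_neg_one])
    rw [Nat.card_Icc] at this
    omega
  · have := abs_add_two_mul_sum_le _ _ _ (abs_neg_one_pow r) hunit
    rw [Nat.card_Icc] at this
    omega

/-- Combinatorial content of the step `n = m` in Corollary 7.2: for `m ≥ 1` there are no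
integer `r ≥ 1` and integers `n 1 > n 2 > ⋯ > n r > 0` with `n 1 = m+1` such that
`|(−1)^r + 2·Σ_{i=1}^{r} (−1)^{i−1+nᵢ}| = 2m+1`. -/
theorem stmt_9 (m : ℕ) (hm : 1 ≤ m) :
    ¬ ∃ (r : ℕ) (n : ℕ → ℕ), 1 ≤ r ∧
      (∀ i, 1 ≤ i → i ≤ r → 0 < n i) ∧
      (∀ i j, 1 ≤ i → i < j → j ≤ r → n j < n i) ∧
      n 1 = m + 1 ∧
      |(-1 : ℤ) ^ r + 2 * ∑ i ∈ Finset.Icc 1 r, (-1 : ℤ) ^ (i - 1 + n i)| =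
        2 * (m : ℤ) + 1 :=
  stmt_9_general m
end

section
/- For every integer m ≥ 1, if r ≥ 1 and n_1 > n_2 > ⋯ > n_r > 0 are integers with n_1 = 2m, and |(−1)^r + 2·Σ_{i=1}^{r} (−1)^{i−1+n_i}| = 4m+1, then r = 2m and n_i = 2m+1−i for every i ∈ {1,…,r}. -/
/-!
A strictly decreasing sequence of `r` positive integers starting at `2m` has `r ≤ 2m`, while
each term of the sum is `±1`, so `4m + 1 ≤ 1 + 2r`. Hence `r = 2m`, and a strictly decreasing
sequence of `2m` positive integers starting at `2m` must be `2m, 2m - 1, …, 1`.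
-/

theorem StrictAntiOn.add_sub_le_nat {n : ℕ → ℕ} {a b : ℕ}
    (hn : StrictAntiOn n (Set.Icc a b)) {i j : ℕ}
    (hai : a ≤ i) (hij : i ≤ j) (hjb : j ≤ b) : n j + (j - i) ≤ n i := by
  induction j, hij using Nat.le_induction with
  | base => simp
  | succ j hij ih =>
    have hstep : n (j + 1) < n j :=
      hn ⟨by omega, by omega⟩ ⟨by omega, hjb⟩ (Nat.lt_succ_self j)
    have := ih (by omega)
    omega

theorem abs_sum_neg_one_pow_le_card {R ι : Type*} [Ring R] [LinearOrder R] [IsStrictOrderedRing R]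
    (s : Finset ι) (f : ι → ℕ) : |∑ i ∈ s, (-1 : R) ^ f i| ≤ s.card :=
  (Finset.abs_sum_le_sum_abs _ _).trans (by simp)

theorem abs_neg_one_pow_add_two_mul_sum_le {R ι : Type*} [Ring R] [LinearOrder R]
    [IsStrictOrderedRing R] (k : ℕ) (s : Finset ι) (f : ι → ℕ) :
    |(-1 : R) ^ k + 2 * ∑ i ∈ s, (-1 : R) ^ f i| ≤ 1 + 2 * s.card := by
  calc |(-1 : R) ^ k + 2 * ∑ i ∈ s, (-1 : R) ^ f i|
      ≤ |(-1 : R) ^ k| + 2 * |∑ i ∈ s, (-1 : R) ^ f i| := by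
        simpa [abs_mul] using abs_add_le ((-1 : R) ^ k) (2 * ∑ i ∈ s, (-1 : R) ^ f i)
    _ ≤ 1 + 2 * s.card := by
        rw [abs_neg_one_pow]
        gcongr
        exact abs_sum_neg_one_pow_le_card s f

theorem stmt_10_general (m : ℕ) (r : ℕ) (hr : 1 ≤ r) (n : ℕ → ℕ)
    (hpos : ∀ i, 1 ≤ i → i ≤ r → 0 < n i)
    (hdec : ∀ i j, 1 ≤ i → i < j → j ≤ r → n j < n i)
    (hn1 : n 1 = 2 * m)
    (hdet : |(-1 : ℤ) ^ r + 2 * ∑ i ∈ Finset.Icc 1 r, (-1 : ℤ) ^ (i - 1 + n i)| =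
      4 * (m : ℤ) + 1) :
    r = 2 * m ∧ ∀ i, 1 ≤ i → i ≤ r → n i = 2 * m + 1 - i := by
  have hanti : StrictAntiOn n (Set.Icc 1 r) := fun i hi j hj hij => hdec i j hi.1 hij hj.2
  have hnr := hpos r hr le_rfl
  have hr_le : r ≤ 2 * m := by
    have := hanti.add_sub_le_nat le_rfl hr le_rfl
    omega
  have hr_ge : 2 * m ≤ r := by
    have := abs_neg_one_pow_add_two_mul_sum_le (R := ℤ) r (Finset.Icc 1 r) (fun i => i - 1 + n i)
    rw [Nat.card_Icc, add_tsub_cancel_right] at this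
    omega
  refine ⟨le_antisymm hr_le hr_ge, fun i hi hir => ?_⟩
  have hupper := hanti.add_sub_le_nat le_rfl hi hir
  have hlower := hanti.add_sub_le_nat hi hir le_rfl
  omega

/-- Combinatorial step in the proof of Theorem 1.3 (case `n = 4m+1`): if `m ≥ 1`, `r ≥ 1`,
`n 1 > n 2 > ⋯ > n r > 0` are integers with `n 1 = 2m`, and
`|(−1)^r + 2·Σ_{i=1}^{r} (−1)^{i−1+nᵢ}| = 4m+1`, then `r = 2m` and `nᵢ = 2m+1−i` for all `i`. -/
theorem stmt_10 (m : ℕ) (hm : 1 ≤ m) (r : ℕ) (hr : 1 ≤ r) (n : ℕ → ℕ)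
    (hpos : ∀ i, 1 ≤ i → i ≤ r → 0 < n i)
    (hdec : ∀ i j, 1 ≤ i → i < j → j ≤ r → n j < n i)
    (hn1 : n 1 = 2 * m)
    (hdet : |(-1 : ℤ) ^ r + 2 * ∑ i ∈ Finset.Icc 1 r, (-1 : ℤ) ^ (i - 1 + n i)| =
      4 * (m : ℤ) + 1) :
    r = 2 * m ∧ ∀ i, 1 ≤ i → i ≤ r → n i = 2 * m + 1 - i :=
  stmt_10_general m r hr n hpos hdec hn1 hdet
end

section
/- Let m ≥ 1 be an integer, ζ ∈ {0,1}, and n = m + ζ. Then for every integer i with 0 ≤ i < n, (2n−i)²/(4n) − 2·⌈(m−i)/2⌉ = i²/(4n) + ζ − θ(n−ζ−i), where θ(k) ∈ {0,1} denotes the reduction of the integer k modulo 2. -/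
theorem Int.two_mul_ceil_intCast_div_two {α : Type*} [Field α] [LinearOrder α]
    [IsStrictOrderedRing α] [FloorRing α] (k : ℤ) :
    2 * ⌈(k : α) / 2⌉ = k + k % 2 := by
  have hcast : (k : α) / 2 = (((k : ℚ) / ((2 : ℕ) : ℚ) : ℚ) : α) := by push_cast; rfl
  rw [hcast, Rat.ceil_cast, Rat.ceil_intCast_div_natCast]
  omega

/-- Since `2⌈k/2⌉ = k + k % 2` and `(2n − i)² = i² + 4n(n − i)`, the identity reduces to
`(n − i) − (m − i) = ζ`. -/
theorem stmt_11_general (m : ℤ) (ζ : ℤ) (n : ℤ) (hn : n = m + ζ)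
    (i : ℤ) (hi0 : 0 ≤ i) (hin : i < n) :
    ((2 * n - i : ℤ) : ℚ) ^ 2 / (4 * (n : ℚ)) - 2 * (⌈((m - i : ℤ) : ℚ) / 2⌉ : ℚ) =
      ((i : ℤ) : ℚ) ^ 2 / (4 * (n : ℚ)) + (ζ : ℚ) - (((n - ζ - i) % 2 : ℤ) : ℚ) := by
  have hn0 : (n : ℚ) ≠ 0 := by exact_mod_cast (hi0.trans_lt hin).ne'
  have hceil := congrArg (Int.cast : ℤ → ℚ) (Int.two_mul_ceil_intCast_div_two (α := ℚ) (m - i))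
  rw [Int.cast_mul, Int.cast_ofNat] at hceil
  obtain rfl : m = n - ζ := by omega
  rw [hceil]
  field_simp
  push_cast
  ring

/-- Computation (7.5) of the correction terms of `S³_{T(2m+1,2)}(4n)`: for `m ≥ 1`,
`ζ ∈ {0,1}`, `n = m + ζ`, and `0 ≤ i < n`,
`(2n−i)²/(4n) − 2·⌈(m−i)/2⌉ = i²/(4n) + ζ − θ(n−ζ−i)`, where `θ(k) = k mod 2 ∈ {0,1}`. -/
theorem stmt_11 (m : ℤ) (hm : 1 ≤ m) (ζ : ℤ) (hζ : ζ = 0 ∨ ζ = 1) (n : ℤ) (hn : n = m + ζ)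
    (i : ℤ) (hi0 : 0 ≤ i) (hin : i < n) :
    ((2 * n - i : ℤ) : ℚ) ^ 2 / (4 * (n : ℚ)) - 2 * (⌈((m - i : ℤ) : ℚ) / 2⌉ : ℚ) =
      ((i : ℤ) : ℚ) ^ 2 / (4 * (n : ℚ)) + (ζ : ℚ) - (((n - ζ - i) % 2 : ℤ) : ℚ) :=
  stmt_11_general m ζ n hn i hi0 hin
end

section
/- Let m ≥ 2 be an even integer. Define D : {0,1,…,4m−1} → ℚ by D(i) = −1/4 + i²/(4m) − θ(m−i) for 0 ≤ i < m, D(i) = −1/4 + (2m−i)²/(4m) for m ≤ i ≤ 2m, and D(i) = D(4m−i) for 2m < i < 4m, where θ(k) ∈ {0,1} is the reduction of k modulo 2. Then the minimal value of D over {0,1,…,4m−1} is −1/4 + 1/(4m) − 1, and D(i) attains this minimum if and only if i = 1 or i = 4m−1. -/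
/-- The correction terms `D(i) = d(S³_{T(2m+1,2)}(4m), i)` of formula (7.5) (with `n = m`,
`ζ = 0`): `D(i) = −1/4 + i²/(4m) − θ(m−i)` for `0 ≤ i < m`,
`D(i) = −1/4 + (2m−i)²/(4m)` for `m ≤ i ≤ 2m`, and `D(i) = D(4m−i)` for `2m < i < 4m`,
where `θ(k) = k mod 2 ∈ {0,1}`. -/
def corrD (m i : ℤ) : ℚ :=
  let j : ℤ := if i ≤ 2 * m then i else 4 * m - i
  if j < m then -1 / 4 + ((j : ℚ)) ^ 2 / (4 * (m : ℚ)) - (((m - j) % 2 : ℤ) : ℚ)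
  else -1 / 4 + (((2 * m - j : ℤ) : ℚ)) ^ 2 / (4 * (m : ℚ))

lemma keyj (m j : ℤ) (hm : 2 ≤ m) (heven : Even m) (h0 : 0 ≤ j) (h2 : j ≤ 2 * m) :
    (-1 / 4 + 1 / (4 * (m : ℚ)) - 1 ≤
      (if j < m then -1 / 4 + ((j : ℚ)) ^ 2 / (4 * (m : ℚ)) - (((m - j) % 2 : ℤ) : ℚ)
       else -1 / 4 + (((2 * m - j : ℤ) : ℚ)) ^ 2 / (4 * (m : ℚ)))) ∧
    ((if j < m then -1 / 4 + ((j : ℚ)) ^ 2 / (4 * (m : ℚ)) - (((m - j) % 2 : ℤ) : ℚ)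
       else -1 / 4 + (((2 * m - j : ℤ) : ℚ)) ^ 2 / (4 * (m : ℚ)))
      = -1 / 4 + 1 / (4 * (m : ℚ)) - 1 ↔ j = 1) := by
  obtain ⟨k, hk⟩ := heven
  have hq : (2 : ℚ) ≤ (m : ℚ) := by exact_mod_cast hm
  have hq0 : (0 : ℚ) < 4 * (m : ℚ) := by linarith
  have hinv : 1 / (4 * (m : ℚ)) ≤ 1 / 8 := by
    rw [div_le_div_iff₀ hq0 (by norm_num)]; linarith
  by_cases hjm : j < m
  · simp only [if_pos hjm]
    rcases Int.emod_two_eq (m - j) with h1 | h1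
    · have hjne : j ≠ 1 := by omega
      have hj2 : (0 : ℚ) ≤ (j : ℚ) ^ 2 := sq_nonneg _
      have hd : (0 : ℚ) ≤ (j : ℚ) ^ 2 / (4 * (m : ℚ)) := div_nonneg hj2 hq0.le
      rw [h1]
      push_cast
      constructor
      · linarith
      · constructor
        · intro h; exfalso; linarith
        · intro h; exact absurd h hjne
    · have hj1 : 1 ≤ j := by omega
      have hjq : (1 : ℚ) ≤ (j : ℚ) := by exact_mod_cast hj1
      have hsq : (1 : ℚ) ≤ (j : ℚ) ^ 2 := by nlinarith
      rw [h1]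
      constructor
      · have : 1 / (4 * (m : ℚ)) ≤ (j : ℚ) ^ 2 / (4 * (m : ℚ)) :=
          (div_le_div_iff_of_pos_right hq0).mpr hsq
        push_cast
        linarith
      · constructor
        · intro hEq
          by_contra hne
          have hj3 : 3 ≤ j := by omega
          have h3q : (3 : ℚ) ≤ (j : ℚ) := by exact_mod_cast hj3
          have h9 : (9 : ℚ) ≤ (j : ℚ) ^ 2 := by nlinarith
          have : 1 / (4 * (m : ℚ)) < (j : ℚ) ^ 2 / (4 * (m : ℚ)) :=
            (div_lt_div_iff_of_pos_right hq0).mpr (by linarith)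
          push_cast at hEq
          linarith
        · intro h; subst h; norm_num
  · simp only [if_neg hjm]
    have hjne : j ≠ 1 := by omega
    have hd : (0 : ℚ) ≤ ((2 * m - j : ℤ) : ℚ) ^ 2 / (4 * (m : ℚ)) :=
      div_nonneg (sq_nonneg _) hq0.le
    constructor
    · linarith
    · constructor
      · intro h; exfalso; linarith
      · intro h; exact absurd h hjne

/-- Even-`m` case in the proof of Lemma 7.8: for even `m ≥ 2`, the minimal value of `D`
over `{0,1,…,4m−1}` is `−1/4 + 1/(4m) − 1`, attained exactly at `i = 1` and `i = 4m−1`. -/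
theorem stmt_13 (m : ℤ) (hm : 2 ≤ m) (heven : Even m) :
    (∀ i : ℤ, 0 ≤ i → i < 4 * m → -1 / 4 + 1 / (4 * (m : ℚ)) - 1 ≤ corrD m i) ∧
    (∀ i : ℤ, 0 ≤ i → i < 4 * m →
      (corrD m i = -1 / 4 + 1 / (4 * (m : ℚ)) - 1 ↔ i = 1 ∨ i = 4 * m - 1)) := by
  have key : ∀ i : ℤ, 0 ≤ i → i < 4 * m →
      (-1 / 4 + 1 / (4 * (m : ℚ)) - 1 ≤ corrD m i) ∧
      (corrD m i = -1 / 4 + 1 / (4 * (m : ℚ)) - 1 ↔ i = 1 ∨ i = 4 * m - 1) := by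
    intro i h0 h4
    unfold corrD
    by_cases hi : i ≤ 2 * m
    · simp only [if_pos hi]
      have := keyj m i hm heven h0 hi
      refine ⟨this.1, this.2.trans ?_⟩
      constructor
      · intro h; exact Or.inl h
      · rintro (h | h) <;> omega
    · simp only [if_neg hi]
      have := keyj m (4 * m - i) hm heven (by omega) (by omega)
      refine ⟨this.1, this.2.trans ?_⟩
      constructor
      · intro h; right; omega
      · rintro (h | h) <;> omega
  exact ⟨fun i h0 h4 => (key i h0 h4).1, fun i h0 h4 => (key i h0 h4).2⟩
end

section
/- Let m ≥ 1 be an odd integer. Define D : {0,1,…,4m−1} → ℚ by D(i) = −1/4 + i²/(4m) − θ(m−i) for 0 ≤ i < m, D(i) = −1/4 + (2m−i)²/(4m) for m ≤ i ≤ 2m, and D(i) = D(4m−i) for 2m < i < 4m, where θ(k) ∈ {0,1} is the reduction of k modulo 2. Then the set { i ∈ {0,1,…,4m−1} : D(i) = −1/4 + 1/(4m) } equals {1, 2m−1, 2m+1, 4m−1}. -/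
theorem Int.sq_ne_four_mul_add_one {m : ℤ} (hodd : Odd m) (j : ℤ) : j ^ 2 ≠ 4 * m + 1 := by
  intro h
  rcases Int.even_or_odd' j with ⟨k, rfl | rfl⟩
  · have : 4 * (k * k) = 4 * m + 1 := by linear_combination h
    omega
  · have hm : m = k * (k + 1) := by linarith
    exact Int.not_even_iff_odd.mpr hodd (hm ▸ Int.even_mul_succ_self k)

theorem neg_quarter_add_div_eq_iff {m : ℤ} (hm : m ≠ 0) {x : ℚ} :
    -1 / 4 + x / (4 * (m : ℚ)) = -1 / 4 + 1 / (4 * (m : ℚ)) ↔ x = 1 := by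
  have : (4 * (m : ℚ)) ≠ 0 := by positivity
  rw [add_right_inj, div_left_inj' this]

theorem corrD_lower_eq_iff {m j : ℤ} (hm : 1 ≤ m) (hodd : Odd m) (hj : 0 ≤ j) :
    -1 / 4 + (j : ℚ) ^ 2 / (4 * (m : ℚ)) - (((m - j) % 2 : ℤ) : ℚ)
      = -1 / 4 + 1 / (4 * (m : ℚ)) ↔ j = 1 := by
  have hm0 : (m : ℚ) ≠ 0 := by exact_mod_cast (by omega : m ≠ 0)
  have hshift : -1 / 4 + (j : ℚ) ^ 2 / (4 * (m : ℚ)) - (((m - j) % 2 : ℤ) : ℚ)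
      = -1 / 4 + ((j ^ 2 - 4 * m * ((m - j) % 2) : ℤ) : ℚ) / (4 * (m : ℚ)) := by
    push_cast
    field_simp
    ring
  rw [hshift, neg_quarter_add_div_eq_iff (by omega), Int.cast_eq_one]
  rcases Int.emod_two_eq (m - j) with hθ | hθ
  · rw [hθ, mul_zero, sub_zero, pow_eq_one_iff_of_nonneg hj two_ne_zero]
  · have hm_odd : m % 2 = 1 := Int.odd_iff.mp hodd
    rw [hθ]
    constructor
    · intro h
      exact absurd (by linear_combination h) (Int.sq_ne_four_mul_add_one hodd j)
    · rintro rfl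
      omega

theorem corrD_upper_eq_iff {m j : ℤ} (hm : 1 ≤ m) (hj : j ≤ 2 * m) :
    -1 / 4 + (((2 * m - j : ℤ) : ℚ)) ^ 2 / (4 * (m : ℚ))
      = -1 / 4 + 1 / (4 * (m : ℚ)) ↔ j = 2 * m - 1 := by
  rw [neg_quarter_add_div_eq_iff (by omega), ← Int.cast_pow, Int.cast_eq_one,
    pow_eq_one_iff_of_nonneg (by omega) two_ne_zero]
  omega

theorem corrD_eq_iff_of_le {m i : ℤ} (hm : 1 ≤ m) (hodd : Odd m) (hi₀ : 0 ≤ i)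
    (hi : i ≤ 2 * m) :
    corrD m i = -1 / 4 + 1 / (4 * (m : ℚ)) ↔ i = 1 ∨ i = 2 * m - 1 := by
  simp only [corrD, if_pos hi]
  split_ifs with him
  · rw [corrD_lower_eq_iff hm hodd hi₀]
    omega
  · rw [corrD_upper_eq_iff hm hi]
    omega

theorem corrD_of_two_mul_lt {m i : ℤ} (hi : 2 * m < i) : corrD m i = corrD m (4 * m - i) := by
  simp only [corrD, if_neg (not_le.mpr hi), if_pos (by omega : 4 * m - i ≤ 2 * m)]

/-- Odd-`m` case in the proof of Lemma 7.8: for odd `m ≥ 1`, the level set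
`{ i ∈ {0,…,4m−1} : D(i) = −1/4 + 1/(4m) }` equals `{1, 2m−1, 2m+1, 4m−1}`. -/
theorem stmt_14 (m : ℤ) (hm : 1 ≤ m) (hodd : Odd m) :
    {i : ℤ | 0 ≤ i ∧ i < 4 * m ∧ corrD m i = -1 / 4 + 1 / (4 * (m : ℚ))} =
      {1, 2 * m - 1, 2 * m + 1, 4 * m - 1} := by
  ext i
  simp only [Set.mem_ofPred_eq, Set.mem_insert_iff, Set.mem_singleton_iff]
  by_cases hi : i ≤ 2 * m
  · by_cases hi₀ : 0 ≤ i
    · rw [corrD_eq_iff_of_le hm hodd hi₀ hi]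
      omega
    · omega
  · by_cases hi₄ : i < 4 * m
    · rw [corrD_of_two_mul_lt (not_le.mp hi), corrD_eq_iff_of_le hm hodd (by omega) (by omega)]
      omega
    · omega
end

section
/- There is no norm ‖·‖ on the real vector space ℝ² with s = ‖(1,0)‖ satisfying all of: ‖(22,1)‖ ≥ s, ‖(21,1)‖ ≤ s+2, ‖(45,2)‖ ≤ s+2, ‖(23,1)‖ ≤ s+1, and ‖(24,1)‖ ≥ s+6. -/
/-- Contradiction in Case 2 (α = 45/2) of the proof of Theorem 5.1: there is no norm `N`
on ℝ² with `s = N(1,0)` such that `N(22,1) ≥ s`, `N(21,1) ≤ s+2`, `N(45,2) ≤ s+2`,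
`N(23,1) ≤ s+1`, and `N(24,1) ≥ s+6`. -/
theorem stmt_16 :
    ¬ ∃ (N : ℝ × ℝ → ℝ) (s : ℝ),
      (∀ x, N x = 0 ↔ x = 0) ∧
      (∀ (c : ℝ) (x : ℝ × ℝ), N (c • x) = |c| * N x) ∧
      (∀ x y, N (x + y) ≤ N x + N y) ∧
      s = N (1, 0) ∧
      s ≤ N (22, 1) ∧ N (21, 1) ≤ s + 2 ∧ N (45, 2) ≤ s + 2 ∧
      N (23, 1) ≤ s + 1 ∧ s + 6 ≤ N (24, 1) := by
  rintro ⟨N, s, -, hom, tri, hs, h22, h21, h45, h23, h24⟩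
  have h66 : N (66, 3) = 3 * N (22, 1) := by
    have := hom 3 (22, 1)
    norm_num [Prod.smul_mk, abs_of_nonneg] at this; convert this using 2 <;> norm_num
  have t1 : N (66, 3) ≤ N (21, 1) + N (45, 2) := by
    have := tri (21, 1) (45, 2)
    norm_num [Prod.mk_add_mk] at this ⊢
    convert this using 2 <;> norm_num
  have t2 : N (24, 1) ≤ N (23, 1) + N (1, 0) := by
    have := tri (23, 1) (1, 0)
    convert this using 2 <;> norm_num
  nlinarith [h22, h21, h45, h23, h24, t1, t2, h66, hs]
end

section
/- Let p be an integer and let B ⊆ ℝ² be a closed convex set that is symmetric about the origin (−B = B) and contains the points (1,0) and (2p+1,2). Then the two-dimensional Lebesgue measure of B is at least 4, and if it equals 4 then B is the convex hull of the four points (1,0), (−1,0), (2p+1,2), (−2p−1,−2). -/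
open Pointwise MeasureTheory
open scoped ENNReal

/-!
The four points lie in `B`, hence so does the parallelogram `P` they span, which is the image of
the square `[-1,1]²` under a linear map of determinant `-1/2`, so `vol P = 4`. If `vol B = 4` and
some `x ∈ B` lay outside the closed set `P`, then, `B` being convex of positive measure, `x` would
be a limit of interior points of `B`, so `interior B \ P` would be a nonempty open set, of positive
measure, contradicting `vol (B \ P) = vol B - vol P = 0`.
-/

/-- The linear map with `(1, 1) ↦ a` and `(1, -1) ↦ b`. -/
noncomputable def squareToParallelogram (a b : ℝ × ℝ) : ℝ × ℝ →ₗ[ℝ] ℝ × ℝ :=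
  Matrix.toLin (Module.Basis.finTwoProd ℝ) (Module.Basis.finTwoProd ℝ)
    !![(a.1 + b.1) / 2, (a.1 - b.1) / 2; (a.2 + b.2) / 2, (a.2 - b.2) / 2]

theorem det_squareToParallelogram (a b : ℝ × ℝ) :
    (squareToParallelogram a b).det = (a.2 * b.1 - a.1 * b.2) / 2 := by
  rw [squareToParallelogram, LinearMap.det_toLin, Matrix.det_fin_two_of]
  ring

theorem convexHull_square :
    convexHull ℝ ({(1, 1), (-1, -1), (1, -1), (-1, 1)} : Set (ℝ × ℝ)) =
      Set.Icc (-1) 1 ×ˢ Set.Icc (-1) 1 := by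
  have : ({(1, 1), (-1, -1), (1, -1), (-1, 1)} : Set (ℝ × ℝ)) = {-1, 1} ×ˢ {-1, 1} := by
    ext ⟨s, t⟩
    simp only [Set.mem_insert_iff, Set.mem_singleton_iff, Prod.mk.injEq, Set.mem_prod]
    tauto
  rw [this, convexHull_prod, convexHull_pair, segment_eq_Icc (by norm_num)]

theorem image_squareToParallelogram (a b : ℝ × ℝ) :
    squareToParallelogram a b '' {(1, 1), (-1, -1), (1, -1), (-1, 1)} = {a, -a, b, -b} := by
  have happly (s t : ℝ) :
      squareToParallelogram a b (s, t) = ((s + t) / 2) • a + ((s - t) / 2) • b := by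
    ext <;> simp [squareToParallelogram] <;> ring
  simp only [Set.image_insert_eq, Set.image_singleton, happly]
  norm_num

theorem volume_convexHull_parallelogram (a b : ℝ × ℝ) :
    volume (convexHull ℝ {a, -a, b, -b}) = ENNReal.ofReal (2 * |a.1 * b.2 - a.2 * b.1|) := by
  rw [← image_squareToParallelogram, ← LinearMap.image_convexHull, convexHull_square,
    Measure.addHaar_image_linearMap, det_squareToParallelogram, Measure.volume_eq_prod,
    Measure.prod_prod, Real.volume_Icc, ← ENNReal.ofReal_mul (by norm_num),
    ← ENNReal.ofReal_mul (abs_nonneg _)]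
  congr 1
  rw [abs_div, abs_two, abs_sub_comm]
  ring

section Convex

variable {E : Type*} [NormedAddCommGroup E] [NormedSpace ℝ E] [MeasurableSpace E] [BorelSpace E]
  [FiniteDimensional ℝ E] (μ : Measure E) [μ.IsAddHaarMeasure] {B P : Set E}

theorem Convex.interior_nonempty_of_measure_ne_zero (hB : Convex ℝ B) (h : μ B ≠ 0) :
    (interior B).Nonempty := by
  by_contra hint
  rw [Set.not_nonempty_iff_eq_empty] at hint
  refine h (measure_mono_null ?_ (hB.addHaar_frontier μ))
  rw [frontier, hint, Set.sdiff_empty]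
  exact subset_closure

theorem Convex.subset_of_measure_le (hB : Convex ℝ B) (hP : IsClosed P) (hPB : P ⊆ B)
    (hle : μ B ≤ μ P) (hfin : μ P ≠ ∞) (hpos : μ B ≠ 0) : B ⊆ P := by
  intro x hxB
  by_contra hxP
  have hdiff : μ (B \ P) = 0 := by
    rw [measure_sdiff hPB hP.measurableSet.nullMeasurableSet hfin, tsub_eq_zero_of_le hle]
  have hclosure : x ∈ closure (interior B) := by
    rw [hB.closure_interior_eq_closure_of_nonempty_interior
      (hB.interior_nonempty_of_measure_ne_zero μ hpos)]
    exact subset_closure hxB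
  obtain ⟨y, hyP, hyB⟩ := mem_closure_iff.1 hclosure Pᶜ hP.isOpen_compl hxP
  have hopen : IsOpen (interior B ∩ Pᶜ) := isOpen_interior.inter hP.isOpen_compl
  refine (hopen.measure_pos μ ⟨y, hyB, hyP⟩).ne' (measure_mono_null ?_ hdiff)
  exact fun z hz => ⟨interior_subset hz.1, hz.2⟩

end Convex

theorem stmt_18_general (p : ℤ) (B : Set (ℝ × ℝ)) (hconv : Convex ℝ B)
    (hsymm : -B = B) (h1 : ((1 : ℝ), (0 : ℝ)) ∈ B) (h2 : ((2 * (p : ℝ) + 1, 2)) ∈ B) :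
    4 ≤ volume B ∧
    (volume B = 4 → B = convexHull ℝ
      ({((1 : ℝ), (0 : ℝ)), (-1, 0), (2 * (p : ℝ) + 1, 2), (-(2 * (p : ℝ) + 1), -2)} :
        Set (ℝ × ℝ))) := by
  set a : ℝ × ℝ := (1, 0)
  set b : ℝ × ℝ := (2 * p + 1, 2)
  have hvertices : ({(1, 0), (-1, 0), (2 * (p : ℝ) + 1, 2), (-(2 * (p : ℝ) + 1), -2)} :
      Set (ℝ × ℝ)) = {a, -a, b, -b} := by
    simp [a, b]
  have hPB : convexHull ℝ {a, -a, b, -b} ⊆ B := by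
    refine convexHull_min ?_ hconv
    have hneg : ∀ x ∈ B, -x ∈ B := fun x hx => hsymm ▸ Set.neg_mem_neg.2 hx
    simp [Set.insert_subset_iff, h1, h2, hneg]
  have hvol : volume (convexHull ℝ {a, -a, b, -b}) = 4 := by
    rw [volume_convexHull_parallelogram]
    norm_num [a, b]
  rw [hvertices]
  refine ⟨hvol ▸ measure_mono hPB, fun hvolB => ?_⟩
  have hPclosed : IsClosed (convexHull ℝ {a, -a, b, -b}) :=
    ((Set.toFinite _).isCompact_convexHull (𝕜 := ℝ)).isClosed
  exact (hconv.subset_of_measure_le volume hPclosed hPB (by rw [hvol, hvolB]) (by simp [hvol])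
    (by simp [hvolB])).antisymm hPB

/-- Convex-geometric fact from the proof of Theorem 3.3 (9): if `B ⊆ ℝ²` is a closed
convex set, symmetric about the origin, containing `(1,0)` and `(2p+1,2)`, then its
Lebesgue measure is at least `4`, and if it equals `4` then `B` is the convex hull of
the four points `(1,0)`, `(−1,0)`, `(2p+1,2)`, `(−2p−1,−2)`. -/
theorem stmt_18 (p : ℤ) (B : Set (ℝ × ℝ)) (hB : IsClosed B) (hconv : Convex ℝ B)
    (hsymm : -B = B) (h1 : ((1 : ℝ), (0 : ℝ)) ∈ B) (h2 : ((2 * (p : ℝ) + 1, 2)) ∈ B) :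
    4 ≤ volume B ∧
    (volume B = 4 → B = convexHull ℝ
      ({((1 : ℝ), (0 : ℝ)), (-1, 0), (2 * (p : ℝ) + 1, 2), (-(2 * (p : ℝ) + 1), -2)} :
        Set (ℝ × ℝ))) :=
  stmt_18_general p B hconv hsymm h1 h2
end
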